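/- arXiv:1108.3212 — 2 statements merged into one kernel-verified Lean document; each statement's English description precedes it below -/
import Mathlib

section
/- Let c₀, c₁, …, cₙ be distinct Gaussian integers such that {c₀, …, cₙ} is an n-universal set, and let b₀, b₁, …, bₙ be distinct Gaussian integers such that |∏_{0 ≤ i < j ≤ n} (b_i − b_j)| = |∏_{0 ≤ i < j ≤ n} (c_i − c_j)|. Then {b₀, …, bₙ} is also an n-universal set. -/
/-!
Write `L^x_i` for the Lagrange basis of degree `≤ n` at the nodes `x₀, …, xₙ`, so that
`L^v_i = ∑ⱼ L^v_i(wⱼ) L^w_j`. A family `x` of distinct nodes is `n`-universal exactly when every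
`L^x_i` is integer-valued. If `c` is universal, the matrix `A = (L^c_i(bⱼ))` is therefore
integral, and interpolating `X^k` at the nodes `c` gives `V(c)ᵀ A = V(b)ᵀ` for the Vandermonde
matrices. The volumes are the Vandermonde determinants up to sign, so `|det A| = 1` and `A` is
invertible over `ℤ[i]`. Its inverse is `(L^b_j(cᵢ))`, so each `L^b_j` takes integral values on
the universal set `c`, hence is integer-valued, and `b` is universal.
-/

open Polynomial

/-- The fraction field of the Gaussian integers. -/
abbrev FF : Type := FractionRing GaussianInt

/-- The canonical embedding of `ℤ[i]` into its fraction field. -/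
noncomputable def ι : GaussianInt →+* FF := algebraMap GaussianInt FF

/-- A polynomial with coefficients in the fraction field of `ℤ[i]` is integer-valued
if it takes values in (the image of) `ℤ[i]` at every Gaussian integer. -/
def IntegerValued (f : FF[X]) : Prop :=
  ∀ z : GaussianInt, f.eval (ι z) ∈ Set.range ι

/-- A set `M ⊆ ℤ[i]` is `n`-universal if every polynomial of degree at most `n`
with coefficients in the fraction field of `ℤ[i]` taking integer values on `M`
is integer-valued. -/
def IsNUniversal (n : ℕ) (M : Set GaussianInt) : Prop :=
  ∀ f : FF[X], f.natDegree ≤ n → (∀ c ∈ M, f.eval (ι c) ∈ Set.range ι) → IntegerValued f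

/-- The volume of a family of Gaussian integers: the product of all pairwise
differences `x i - x j` over pairs `i < j`. -/
def volume {n : ℕ} (x : Fin (n + 1) → GaussianInt) : GaussianInt :=
  ∏ ij ∈ Finset.univ.filter (fun ij : Fin (n + 1) × Fin (n + 1) => ij.1 < ij.2),
    (x ij.1 - x ij.2)

open Matrix Finset

namespace Lagrange

variable {K : Type*} [Field K] {κ : Type*} [Fintype κ] [DecidableEq κ]

theorem degree_basis_lt_card {v : κ → K} (hv : Function.Injective v) (i : κ) :
    (Lagrange.basis univ v i).degree < Fintype.card κ := by
  rw [degree_basis hv.injOn (mem_univ i), card_univ, Nat.cast_lt]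
  exact Nat.sub_lt (Fintype.card_pos_iff.2 ⟨i⟩) one_pos

theorem eval_eq_sum_eval_mul_eval_basis {v : κ → K} (hv : Function.Injective v) {p : K[X]}
    (hp : p.degree < Fintype.card κ) (x : K) :
    p.eval x = ∑ i, p.eval (v i) * (Lagrange.basis univ v i).eval x := by
  conv_lhs => rw [eq_interpolate (s := univ) (f := p) hv.injOn (by rwa [card_univ])]
  simp [interpolate_apply, eval_finsetSum]

theorem natDegree_basis_le {n : ℕ} {v : Fin (n + 1) → K} (hv : Function.Injective v)
    (i : Fin (n + 1)) : (Lagrange.basis univ v i).natDegree ≤ n := by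
  simp [natDegree_basis hv.injOn (mem_univ i)]

noncomputable def basisEvalMatrix (v w : κ → K) : Matrix κ κ K :=
  Matrix.of fun i j => (Lagrange.basis univ v i).eval (w j)

theorem basisEvalMatrix_mul_basisEvalMatrix {v w : κ → K} (hv : Function.Injective v)
    (hw : Function.Injective w) : basisEvalMatrix w v * basisEvalMatrix v w = 1 := by
  ext j k
  rw [mul_apply, one_apply]
  simp only [basisEvalMatrix, of_apply]
  rw [← eval_eq_sum_eval_mul_eval_basis hv (degree_basis_lt_card hw j)]
  split_ifs with hjk
  · exact hjk ▸ eval_basis_self hw.injOn (mem_univ j)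
  · exact eval_basis_of_ne hjk (mem_univ k)

theorem vandermonde_transpose_mul_basisEvalMatrix {n : ℕ} {v : Fin n → K}
    (hv : Function.Injective v) (w : Fin n → K) :
    (vandermonde v)ᵀ * basisEvalMatrix v w = (vandermonde w)ᵀ := by
  ext k j
  have hk : (X ^ (k : ℕ) : K[X]).degree < Fintype.card (Fin n) := by
    rw [degree_X_pow, Fintype.card_fin]; exact_mod_cast k.isLt
  simpa [mul_apply, basisEvalMatrix] using
    (eval_eq_sum_eval_mul_eval_basis hv hk (w j)).symm

theorem det_basisEvalMatrix_mul_det_vandermonde {n : ℕ} {v : Fin n → K}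
    (hv : Function.Injective v) (w : Fin n → K) :
    (basisEvalMatrix v w).det * (vandermonde v).det = (vandermonde w).det := by
  simpa [det_transpose, mul_comm] using
    congrArg det (vandermonde_transpose_mul_basisEvalMatrix hv w)

end Lagrange

theorem RingHom.mapMatrix_nonsing_inv {R S n : Type*} [CommRing R] [CommRing S] [Fintype n]
    [DecidableEq n] (f : R →+* S) {A : Matrix n n R} (hA : IsUnit A.det) :
    (f.mapMatrix A)⁻¹ = f.mapMatrix A⁻¹ :=
  inv_eq_right_inv (by rw [← map_mul, mul_nonsing_inv A hA, map_one])

theorem Matrix.mapMatrix_vandermonde {R S : Type*} [CommRing R] [CommRing S] (f : R →+* S)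
    {n : ℕ} (v : Fin n → R) : f.mapMatrix (vandermonde v) = vandermonde (f ∘ v) := by
  ext; simp [vandermonde_apply]

theorem GaussianInt.isUnit_of_norm_mul_eq {a y : GaussianInt} (hy : y ≠ 0)
    (h : ‖toComplex (a * y)‖ = ‖toComplex y‖) : IsUnit a := by
  have hy' : ‖toComplex y‖ ≠ 0 := by simpa using hy
  have ha : ‖toComplex a‖ = 1 := by
    rw [map_mul, norm_mul] at h
    exact mul_right_cancel₀ hy' (h.trans (one_mul _).symm)
  have hnorm : (a.norm : ℝ) = 1 := by
    rw [intCast_real_norm, Complex.normSq_eq_norm_sq, ha, one_pow]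
  rw [← Zsqrtd.norm_eq_one_iff' (by norm_num)]
  exact_mod_cast hnorm

theorem norm_toComplex_volume {n : ℕ} (x : Fin (n + 1) → GaussianInt) :
    ‖GaussianInt.toComplex (volume x)‖ = ‖GaussianInt.toComplex (vandermonde x).det‖ := by
  rw [volume, det_vandermonde, prod_finset_product _ univ Ioi (by simp)]
  simp [map_prod, norm_prod, norm_sub_rev]

theorem ι_injective : Function.Injective ι := IsFractionRing.injective GaussianInt FF

theorem IsNUniversal.integerValued_basis {n : ℕ} {x : Fin (n + 1) → GaussianInt}
    (hx : Function.Injective x) (h : IsNUniversal n (Set.range x)) (i : Fin (n + 1)) :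
    IntegerValued (Lagrange.basis univ (ι ∘ x) i) := by
  have hv := ι_injective.comp hx
  refine h _ (Lagrange.natDegree_basis_le hv i) ?_
  rintro _ ⟨j, rfl⟩
  by_cases hij : i = j
  · exact ⟨1, by subst hij; simpa using (Lagrange.eval_basis_self hv.injOn (mem_univ i)).symm⟩
  · exact ⟨0, by simpa using (Lagrange.eval_basis_of_ne (v := ι ∘ x) hij (mem_univ j)).symm⟩

theorem IsNUniversal.exists_mapMatrix_eq_basisEvalMatrix {n : ℕ} {x : Fin (n + 1) → GaussianInt}
    (hx : Function.Injective x) (h : IsNUniversal n (Set.range x)) (y : Fin (n + 1) → GaussianInt) :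
    ∃ A : Matrix (Fin (n + 1)) (Fin (n + 1)) GaussianInt,
      ι.mapMatrix A = Lagrange.basisEvalMatrix (ι ∘ x) (ι ∘ y) := by
  choose A hA using fun i j => h.integerValued_basis hx i (y j)
  exact ⟨Matrix.of A, Matrix.ext hA⟩

theorem isNUniversal_range_of_integerValued_basis {n : ℕ} {x : Fin (n + 1) → GaussianInt}
    (hx : Function.Injective x) (h : ∀ i, IntegerValued (Lagrange.basis univ (ι ∘ x) i)) :
    IsNUniversal n (Set.range x) := by
  intro f hf hfx z
  have hdeg : f.degree < Fintype.card (Fin (n + 1)) := by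
    rw [Fintype.card_fin]
    exact (degree_le_of_natDegree_le hf).trans_lt (by exact_mod_cast n.lt_succ_self)
  rw [Lagrange.eval_eq_sum_eval_mul_eval_basis (ι_injective.comp hx) hdeg]
  exact Subring.sum_mem ι.range fun i _ => Subring.mul_mem _ (hfx _ ⟨i, rfl⟩) (h i z)

/-- If `c` enumerates an `n`-universal set of `n + 1` distinct Gaussian integers and `b`
is a family of `n + 1` distinct Gaussian integers whose volume has the same absolute
value, then `b` also enumerates an `n`-universal set. -/
theorem universal_of_eq_volume (n : ℕ) (c b : Fin (n + 1) → GaussianInt)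
    (hc : Function.Injective c) (hb : Function.Injective b)
    (huniv : IsNUniversal n (Set.range c))
    (hvol : ‖GaussianInt.toComplex (volume b)‖ =
      ‖GaussianInt.toComplex (volume c)‖) :
    IsNUniversal n (Set.range b) := by
  have hv := ι_injective.comp hc
  have hw := ι_injective.comp hb
  obtain ⟨A, hAmap⟩ := huniv.exists_mapMatrix_eq_basisEvalMatrix hc b
  have hdet : A.det * (vandermonde c).det = (vandermonde b).det := ι_injective <| by
    rw [map_mul, RingHom.map_det, RingHom.map_det, RingHom.map_det, hAmap,
      mapMatrix_vandermonde, mapMatrix_vandermonde]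
    exact Lagrange.det_basisEvalMatrix_mul_det_vandermonde hv _
  have hunit : IsUnit A.det := GaussianInt.isUnit_of_norm_mul_eq
    (det_vandermonde_ne_zero_iff.2 hc)
    (by rw [hdet, ← norm_toComplex_volume, hvol, norm_toComplex_volume])
  have hinv : Lagrange.basisEvalMatrix (ι ∘ b) (ι ∘ c) = ι.mapMatrix A⁻¹ := by
    rw [← inv_eq_left_inv (Lagrange.basisEvalMatrix_mul_basisEvalMatrix hv hw), ← hAmap,
      ι.mapMatrix_nonsing_inv hunit]
  refine isNUniversal_range_of_integerValued_basis hb fun j =>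
    huniv _ (Lagrange.natDegree_basis_le hw j) ?_
  rintro _ ⟨k, rfl⟩
  exact ⟨A⁻¹ j k, (congrFun (congrFun hinv j) k).symm⟩
end

section
/- Let p be a prime element of ℤ[i], and let C ⊆ ℤ[i] be an (n, p)-universal set, i.e. |C| = n+1 and C is almost uniformly distributed modulo p^k for every positive integer k. If f is a polynomial with coefficients in the fraction field of ℤ[i] of degree at most n with f(C) ⊆ ℤ[i], then for every z ∈ ℤ[i] the value f(z) can be written as a fraction a/b with a, b ∈ ℤ[i], b ≠ 0, and p does not divide b. -/
open Polynomial

/-- `M(r mod α)`: the elements of `M` congruent to `r` modulo `α`. -/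
def ResidueSet (M : Finset GaussianInt) (α r : GaussianInt) : Set GaussianInt :=
  (M : Set GaussianInt) ∩ {z | α ∣ z - r}

/-- A finite set `M ⊆ ℤ[i]` is almost uniformly distributed modulo `α` if the
cardinalities of any two residue classes of `M` modulo `α` are equal or differ by one. -/
def AlmostUnifDist (M : Finset GaussianInt) (α : GaussianInt) : Prop :=
  ∀ r s : GaussianInt,
    (ResidueSet M α r).ncard = (ResidueSet M α s).ncard ∨
    (ResidueSet M α r).ncard + 1 = (ResidueSet M α s).ncard ∨
    (ResidueSet M α s).ncard + 1 = (ResidueSet M α r).ncard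

/-!
By Lagrange interpolation on the `n + 1` nodes of `C`,
`f(z) = ∑_{c ∈ C} f(c) ∏_{x ≠ c} (z - x) / (c - x)`, so it suffices that the `p`-adic valuation
of each denominator `∏_{x ≠ c} (c - x)` is at most that of the numerator `∏_{x ≠ c} (z - x)`.
Both valuations are layer sums: `∑_{k ≥ 1} #{x ≠ c | p ^ k ∣ w - x}` for `w = c, z`, and almost
uniform distribution modulo `p ^ k` says that no residue class of `C` modulo `p ^ k` is smaller
than the class of `c` minus one, i.e. the term for `w = z` dominates the term for `w = c`.
-/

open Finset
open scoped Classical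

theorem Finset.sum_eq_sum_range_card_filter_lt {β : Type*} (s : Finset β) (m : β → ℕ) {K : ℕ}
    (hK : ∀ x ∈ s, m x ≤ K) : ∑ x ∈ s, m x = ∑ k ∈ range K, #{x ∈ s | k < m x} := by
  calc ∑ x ∈ s, m x = ∑ x ∈ s, #{k ∈ range K | k < m x} := by
        refine sum_congr rfl fun x hx => ?_
        have hrange : {k ∈ range K | k < m x} = range (m x) := by
          ext k
          simp only [mem_range, mem_filter]
          have := hK x hx
          omega
        rw [hrange, card_range]
    _ = _ := by simp only [card_filter]; exact sum_comm

theorem emultiplicity_prod_le_of_card_pow_dvd_le {α β : Type*} [CommMonoidWithZero α]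
    [IsCancelMulZero α] [WfDvdMonoid α] {p : α} (hp : Prime p) {s : Finset β} {g h : β → α}
    (hg : ∀ x ∈ s, g x ≠ 0)
    (hcard : ∀ k : ℕ, #{x ∈ s | p ^ (k + 1) ∣ g x} ≤ #{x ∈ s | p ^ (k + 1) ∣ h x}) :
    emultiplicity p (∏ x ∈ s, g x) ≤ emultiplicity p (∏ x ∈ s, h x) := by
  by_cases h0 : ∃ x ∈ s, h x = 0
  · obtain ⟨x, hx, hx0⟩ := h0
    rw [prod_eq_zero hx hx0, emultiplicity_zero]
    exact le_top
  push Not at h0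
  have emultiplicity_prod {u : β → α} (hu : ∀ x ∈ s, u x ≠ 0) :
      emultiplicity p (∏ x ∈ s, u x) = ∑ x ∈ s, multiplicity p (u x) := by
    rw [Finset.emultiplicity_prod hp, Nat.cast_sum]
    exact sum_congr rfl fun x hx =>
      (FiniteMultiplicity.of_prime_left hp (hu x hx)).emultiplicity_eq_multiplicity
  have card_layer {u : β → α} (hu : ∀ x ∈ s, u x ≠ 0) (k : ℕ) :
      #{x ∈ s | k < multiplicity p (u x)} = #{x ∈ s | p ^ (k + 1) ∣ u x} := by
    congr 1
    refine filter_congr fun x hx => ?_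
    rw [(FiniteMultiplicity.of_prime_left hp (hu x hx)).pow_dvd_iff_le_multiplicity]
    omega
  set K := ∑ x ∈ s, (multiplicity p (g x) + multiplicity p (h x))
  have hK (x) (hx : x ∈ s) : multiplicity p (g x) + multiplicity p (h x) ≤ K :=
    single_le_sum (f := fun x => multiplicity p (g x) + multiplicity p (h x))
      (fun _ _ => Nat.zero_le _) hx
  rw [emultiplicity_prod hg, emultiplicity_prod h0, Nat.cast_le,
    sum_eq_sum_range_card_filter_lt _ _ fun x hx => (Nat.le_add_right _ _).trans (hK x hx),
    sum_eq_sum_range_card_filter_lt _ _ fun x hx => (Nat.le_add_left _ _).trans (hK x hx)]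
  refine sum_le_sum fun k _ => ?_
  rw [card_layer hg, card_layer h0]
  exact hcard k

section pIntegral

variable {A : Type*} (K : Type*) [CommRing A] [IsDomain A] [Field K] [Algebra A K]
  [IsFractionRing A K] {p : A}

noncomputable def pIntegralSubalgebra (hp : Prime p) : Subalgebra A K :=
  haveI := (Ideal.span_singleton_prime hp.ne_zero).mpr hp
  Localization.subalgebra.ofField K (Ideal.span {p}).primeCompl
    (Ideal.primeCompl_le_nonZeroDivisors _)

variable {K}

theorem mem_pIntegralSubalgebra_iff (hp : Prime p) {x : K} :
    x ∈ pIntegralSubalgebra K hp ↔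
      ∃ a b, ¬ p ∣ b ∧ x = algebraMap A K a / algebraMap A K b := by
  show (∃ a s, ∃ (_ : s ∈ _), x = _ * _⁻¹) ↔ _
  simp only [Ideal.primeCompl, Submonoid.mem_mk, Subsemigroup.mem_mk, Set.mem_compl_iff,
    SetLike.mem_coe, Ideal.mem_span_singleton, exists_prop, div_eq_mul_inv]

theorem div_mem_pIntegralSubalgebra_of_emultiplicity_le [WfDvdMonoid A] (hp : Prime p)
    {a b : A} (hb : b ≠ 0) (hab : emultiplicity p b ≤ emultiplicity p a) :
    algebraMap A K a / algebraMap A K b ∈ pIntegralSubalgebra K hp := by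
  have hfin := FiniteMultiplicity.of_prime_left hp hb
  obtain ⟨b', hb', hpb'⟩ := hfin.exists_eq_pow_mul_and_not_dvd
  obtain ⟨a', ha'⟩ : p ^ multiplicity p b ∣ a :=
    pow_dvd_of_le_emultiplicity (hfin.emultiplicity_eq_multiplicity ▸ hab)
  have hpow : algebraMap A K (p ^ multiplicity p b) ≠ 0 :=
    IsFractionRing.to_map_ne_zero_of_mem_nonZeroDivisors
      (mem_nonZeroDivisors_of_ne_zero (pow_ne_zero _ hp.ne_zero))
  refine (mem_pIntegralSubalgebra_iff hp).mpr ⟨a', b', hpb', ?_⟩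
  generalize multiplicity p b = t at ha' hb' hpow
  rw [ha', hb', map_mul, map_mul, mul_div_mul_left _ _ hpow]

end pIntegral

theorem Lagrange.eval_basis_eq_prod_div {F κ : Type*} [Field F] [DecidableEq κ] (s : Finset κ)
    (v : κ → F) (i : κ) (x : F) :
    (Lagrange.basis s v i).eval x =
      (∏ j ∈ s.erase i, (x - v j)) / ∏ j ∈ s.erase i, (v i - v j) := by
  rw [Lagrange.basis, eval_prod, ← prod_div_distrib]
  refine prod_congr rfl fun j _ => ?_
  rw [Lagrange.basisDivisor, eval_mul, eval_C, eval_sub, eval_X, eval_C, div_eq_inv_mul]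

theorem ncard_residueSet (M : Finset GaussianInt) (α r : GaussianInt) :
    (ResidueSet M α r).ncard = #{x ∈ M | α ∣ r - x} := by
  rw [← Set.ncard_coe_finset]
  congr 1
  ext x
  simp [ResidueSet, dvd_sub_comm]

theorem AlmostUnifDist.card_erase_dvd_sub_le {C : Finset GaussianInt} {q : GaussianInt}
    (hq : AlmostUnifDist C q) {c : GaussianInt} (hc : c ∈ C) (z : GaussianInt) :
    #{x ∈ C.erase c | q ∣ c - x} ≤ #{x ∈ C.erase c | q ∣ z - x} := by
  rw [filter_erase, filter_erase, card_erase_of_mem (by simp [hc])]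
  by_cases hzc : q ∣ z - c
  · have hclass (x : GaussianInt) : q ∣ c - x ↔ q ∣ z - x := by
      rw [← sub_add_sub_cancel z c x, dvd_add_right hzc]
    simp only [hclass]
    exact (card_erase_of_mem (by simp [hc, hzc])).ge
  · rw [erase_eq_of_notMem (by simp [hzc])]
    have := hq z c
    rw [ncard_residueSet, ncard_residueSet] at this
    omega

theorem emultiplicity_prod_sub_le_of_almostUnifDist {p : GaussianInt} (hp : Prime p)
    {C : Finset GaussianInt} (hC : ∀ k : ℕ, 0 < k → AlmostUnifDist C (p ^ k))
    {c : GaussianInt} (hc : c ∈ C) (z : GaussianInt) :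
    emultiplicity p (∏ x ∈ C.erase c, (c - x)) ≤ emultiplicity p (∏ x ∈ C.erase c, (z - x)) :=
  emultiplicity_prod_le_of_card_pow_dvd_le hp
    (fun _ hx => sub_ne_zero.mpr (ne_of_mem_erase hx).symm)
    fun k => (hC (k + 1) k.succ_pos).card_erase_dvd_sub_le hc z

/-- If `C` is an `(n, p)`-universal set (i.e. `|C| = n + 1` and `C` is almost uniformly
distributed modulo every power of the prime `p`) and `f` is a polynomial of degree at
most `n` taking integer values on `C`, then every value `f(z)`, `z ∈ ℤ[i]`, is a
fraction whose denominator is not divisible by `p`. -/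
theorem np_universal_denominator (n : ℕ) (p : GaussianInt) (hp : Prime p)
    (C : Finset GaussianInt) (hcard : C.card = n + 1)
    (hC : ∀ k : ℕ, 0 < k → AlmostUnifDist C (p ^ k))
    (f : FF[X]) (hdeg : f.natDegree ≤ n)
    (hvals : ∀ c ∈ C, f.eval (ι c) ∈ Set.range ι) :
    ∀ z : GaussianInt, ∃ a b : GaussianInt, b ≠ 0 ∧ ¬ p ∣ b ∧
      f.eval (ι z) = ι a / ι b := by
  intro z
  have hinj : Set.InjOn ι C := (IsFractionRing.injective GaussianInt FF).injOn
  have hdeg_lt : f.degree < #C := by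
    rw [hcard]
    exact f.degree_le_natDegree.trans_lt (by exact_mod_cast Nat.lt_succ_of_le hdeg)
  have hmem : f.eval (ι z) ∈ pIntegralSubalgebra FF hp := by
    rw [Lagrange.eq_interpolate hinj hdeg_lt, Lagrange.interpolate_apply, eval_finsetSum]
    refine Subalgebra.sum_mem _ fun c hc => ?_
    obtain ⟨w, hw⟩ := hvals c hc
    rw [eval_mul, eval_C, ← hw, Lagrange.eval_basis_eq_prod_div]
    simp only [← map_sub, ← map_prod]
    exact Subalgebra.mul_mem _ (Subalgebra.algebraMap_mem _ w)
      (div_mem_pIntegralSubalgebra_of_emultiplicity_le hp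
        (prod_ne_zero_iff.mpr fun _ hx => sub_ne_zero.mpr (ne_of_mem_erase hx).symm)
        (emultiplicity_prod_sub_le_of_almostUnifDist hp hC hc z))
  obtain ⟨a, b, hb, hab⟩ := (mem_pIntegralSubalgebra_iff hp).mp hmem
  exact ⟨a, b, fun h0 => hb (h0 ▸ dvd_zero p), hb, hab⟩
end
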